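/- Let n ≥ 1, k ≥ 1, and let λ = (λ_1 ≥ … ≥ λ_n ≥ 0) be a partition with at most n parts. Then, as an identity in MvPolynomial (Fin n) ℤ: n! · det(x_i^{λ_j+n−j})_{1≤i,j≤n} · Δ(X)^{2k−2} = Δ(X) · ∑_{(σ_1,…,σ_{2k}) ∈ (S_n)^{2k}} sign(σ_1)⋯sign(σ_{2k}) · ∏_{i=1}^n h_{λ_{σ_1(i)} + (n−σ_1(i)) + (n−σ_2(i)) + ⋯ + (n−σ_{2k−1}(i)) + σ_{2k}(i) − n}(X). Equivalently, S_λ(X)·Δ(X)^{2(k−1)} equals the (1/n!-scaled) hyperdeterminant of the 2k-th order hypermatrix with entries h_{λ_{i_1}+(n−i_1)+⋯+(n−i_{2k−1})+i_{2k}−n}(X), 1 ≤ i_1,…,i_{2k} ≤ n. -/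

import Mathlib

/-- `hh n p` is the `p`-th complete homogeneous symmetric polynomial in `n`
variables, with the convention `hh n p = 0` for `p < 0` and `hh n 0 = 1`. -/
noncomputable def hh (n : ℕ) (p : ℤ) : MvPolynomial (Fin n) ℤ :=
  if 0 ≤ p then MvPolynomial.hsymm (Fin n) ℤ p.toNat else 0

/-- The Vandermonde polynomial `Δ(X) = ∏_{i<j} (x_i − x_j)`. -/
noncomputable def vandermondePoly (n : ℕ) : MvPolynomial (Fin n) ℤ :=
  ∏ p ∈ Finset.univ.filter (fun p : Fin n × Fin n => p.1 < p.2),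
    (MvPolynomial.X p.1 - MvPolynomial.X p.2)

/-!
For every `i`, `x_i^m = ∑_q (-1)^q e_q(X ∖ x_i) h_{m-q}(X)`: it is the coefficient of `t^m`
in `∏_{j ≠ i} (1 - x_j t) · ∏_j (1 - x_j t)⁻¹ = (1 - x_i t)⁻¹`. Hence `(x_i^{m_j}) = E · J(m)`
with `J(m)_{q,j} = h_{m_j+q+1-n}` and `E` independent of `m`; at `m = δ = (n-1, …, 1, 0)` the
matrix `J(δ)` is unitriangular, so `det E = Δ` and `det(x_i^{m_j}) = Δ · det J(m)` for every `m`.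

In the hyperdeterminant the sum over the last permutation is `det J(m)` for an exponent vector `m`
that is a sum of one term per remaining index. After `Δ · det J(m) = det(x_i^{m_j})`, every entry
is a product over those `2k-1` indices, so the sum over the other `2k-1` permutations factors as
`∑_π sign(π)^{2k} ∏_s det(x_i^{c_s(j)}) = n! · det(x_i^{λ_j+n-j}) · Δ^{2k-2}`.
-/

open Finset MvPolynomial Equiv

section SymmetricOn

variable {σ : Type*} (R : Type*) [CommRing R]

noncomputable def esymmOn (s : Finset σ) (q : ℤ) : MvPolynomial σ R :=
  if 0 ≤ q then ∑ t ∈ s.powersetCard q.toNat, ∏ i ∈ t, X i else 0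

noncomputable def hsymmOn [DecidableEq σ] (s : Finset σ) (p : ℤ) : MvPolynomial σ R :=
  if 0 ≤ p then ∑ t ∈ s.sym p.toNat, (t.1.map X).prod else 0

variable {R} {s t : Finset σ} {a : σ}

@[simp]
lemma esymmOn_natCast (s : Finset σ) (q : ℕ) :
    esymmOn R s q = ∑ t ∈ s.powersetCard q, ∏ i ∈ t, X i := by
  simp [esymmOn]

lemma esymmOn_of_neg {q : ℤ} (hq : q < 0) : esymmOn R s q = 0 := by
  simp [esymmOn, hq.not_ge]

@[simp]
lemma esymmOn_zero (s : Finset σ) : esymmOn R s 0 = 1 := by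
  simpa using esymmOn_natCast (R := R) s 0

lemma esymmOn_of_card_lt {q : ℤ} (hq : #s < q) : esymmOn R s q = 0 := by
  obtain ⟨q, rfl⟩ := Int.eq_ofNat_of_zero_le (show 0 ≤ q by omega)
  simp [powersetCard_eq_empty.mpr (show #s < q by omega)]

variable [DecidableEq σ]

lemma esymmOn_insert (ha : a ∉ s) (q : ℤ) :
    esymmOn R (insert a s) q = esymmOn R s q + X a * esymmOn R s (q - 1) := by
  rcases lt_or_ge q 0 with hq | hq
  · simp [esymmOn_of_neg hq, esymmOn_of_neg (show q - 1 < 0 by omega)]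
  obtain ⟨q, rfl⟩ := Int.eq_ofNat_of_zero_le hq
  cases q with
  | zero => simp [esymmOn_of_neg (show (-1 : ℤ) < 0 by norm_num)]
  | succ q =>
    have hnot : ∀ u ∈ s.powersetCard q, a ∉ u := fun u hu h =>
      ha ((mem_powersetCard.mp hu).1 h)
    rw [show ((q + 1 : ℕ) : ℤ) - 1 = q by omega, esymmOn_natCast, esymmOn_natCast,
      esymmOn_natCast, powersetCard_succ_insert ha, sum_union, sum_image, mul_sum]
    · exact congrArg _ (sum_congr rfl fun u hu => prod_insert (hnot u hu))
    · intro u hu v hv huv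
      simpa [hnot u hu, hnot v hv] using congrArg (·.erase a) huv
    · exact disjoint_left.mpr fun u hu hu' => by
        obtain ⟨v, -, rfl⟩ := mem_image.mp hu'
        exact ha ((mem_powersetCard.mp hu).1 (mem_insert_self a v))

@[simp]
lemma hsymmOn_natCast (s : Finset σ) (p : ℕ) :
    hsymmOn R s p = ∑ t ∈ s.sym p, (t.1.map X).prod := by
  simp [hsymmOn]

lemma hsymmOn_of_neg {p : ℤ} (hp : p < 0) : hsymmOn R s p = 0 := by
  simp [hsymmOn, hp.not_ge]

@[simp]
lemma hsymmOn_zero (s : Finset σ) : hsymmOn R s 0 = 1 := by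
  rw [← Nat.cast_zero, hsymmOn_natCast, sym_zero, sum_singleton]
  rfl

lemma hsymmOn_singleton (a : σ) (p : ℕ) : hsymmOn R {a} p = X a ^ p := by
  simp [sym_singleton, Sym.coe_replicate]

lemma hsymmOn_univ [Fintype σ] (p : ℕ) : hsymmOn R univ p = hsymm σ R p := by
  simp [sym_univ, hsymm]

lemma hsymmOn_insert_natCast (ha : a ∉ s) (p : ℕ) :
    hsymmOn R (insert a s) p
      = ∑ i : Fin (p + 1), X a ^ (i : ℕ) * hsymmOn R s (p - i : ℕ) := by
  simp only [hsymmOn_natCast, mul_sum]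
  rw [← sum_coe_sort ((insert a s).sym p), ← (symInsertEquiv ha).symm.sum_comp,
    Fintype.sum_sigma]
  refine Fintype.sum_congr _ _ fun i => ?_
  rw [← sum_coe_sort (s.sym (p - i))]
  refine Fintype.sum_congr _ _ fun m => ?_
  simp [symInsertEquiv, Sym.coe_fill, Sym.coe_replicate, mul_comm]

lemma hsymmOn_insert (ha : a ∉ s) (p : ℤ) :
    hsymmOn R (insert a s) p = hsymmOn R s p + X a * hsymmOn R (insert a s) (p - 1) := by
  rcases lt_or_ge p 0 with hp | hp
  · simp [hsymmOn_of_neg hp, hsymmOn_of_neg (show p - 1 < 0 by omega)]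
  obtain ⟨p, rfl⟩ := Int.eq_ofNat_of_zero_le hp
  cases p with
  | zero => simp [hsymmOn_of_neg (show (-1 : ℤ) < 0 by norm_num)]
  | succ p =>
    rw [show ((p + 1 : ℕ) : ℤ) - 1 = p by omega, hsymmOn_insert_natCast ha,
      hsymmOn_insert_natCast ha, Fin.sum_univ_succ, mul_sum]
    simp [pow_succ, mul_assoc, mul_left_comm]

theorem sum_esymmOn_mul_hsymmOn_union (hst : Disjoint s t) (m : ℤ) :
    ∑ q ∈ range (#s + 1), (-1) ^ q * esymmOn R s q * hsymmOn R (s ∪ t) (m - q)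
      = hsymmOn R t m := by
  induction s using Finset.induction_on generalizing m with
  | empty => simp
  | @insert a s ha ih =>
    have hat : a ∉ s ∪ t := by
      simp [ha, (disjoint_insert_left.mp hst).1]
    rw [card_insert_of_notMem ha, insert_union]
    set Z := ∑ q ∈ range (#s + 1),
      (-1) ^ q * esymmOn R s q * hsymmOn R (insert a (s ∪ t)) (m - 1 - q)
    have hfirst : ∑ q ∈ range (#s + 1 + 1),
        (-1) ^ q * esymmOn R s q * hsymmOn R (insert a (s ∪ t)) (m - q)
          = hsymmOn R t m + X a * Z := by
      rw [sum_range_succ, esymmOn_of_card_lt (by push_cast; omega), mul_zero, zero_mul,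
        add_zero, ← ih (disjoint_insert_left.mp hst).2 m, mul_sum, ← sum_add_distrib]
      refine sum_congr rfl fun q _ => ?_
      rw [hsymmOn_insert hat, sub_right_comm]
      ring
    have hsecond : ∑ q ∈ range (#s + 1 + 1),
        (-1) ^ q * (X a * esymmOn R s (q - 1)) * hsymmOn R (insert a (s ∪ t)) (m - q)
          = -(X a * Z) := by
      rw [sum_range_succ', Nat.cast_zero, zero_sub, esymmOn_of_neg (by norm_num), mul_zero,
        mul_zero, zero_mul, add_zero, mul_sum, ← sum_neg_distrib]
      refine sum_congr rfl fun q _ => ?_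
      rw [Nat.cast_succ, add_sub_cancel_right, sub_add_eq_sub_sub, sub_right_comm, pow_succ]
      ring
    simp only [esymmOn_insert ha, mul_add, add_mul, sum_add_distrib, hfirst, hsecond]
    abel

theorem X_pow_eq_sum_esymmOn_erase_mul_hsymmOn [Fintype σ] (a : σ) (m : ℕ) :
    X a ^ m = ∑ q ∈ range (Fintype.card σ),
      (-1) ^ q * esymmOn R (univ.erase a) q * hsymmOn R univ (m - q) := by
  have key := sum_esymmOn_mul_hsymmOn_union (R := R) (s := univ.erase a)
    (disjoint_singleton_right.mpr (notMem_erase a _)) (m : ℤ)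
  rw [erase_union_eq a univ (mem_univ a), card_erase_add_one (mem_univ a), card_univ,
    hsymmOn_singleton] at key
  exact key.symm

end SymmetricOn

section Bialternant

variable {n : ℕ}

noncomputable def jacobiTrudiMatrix (m : Fin n → ℕ) :
    Matrix (Fin n) (Fin n) (MvPolynomial (Fin n) ℤ) :=
  .of fun q j => hh n (m j + q + 1 - n)

-- Columns are taken in reverse order (`q ↦ n - 1 - q`) so that `jacobiTrudiMatrix` at the
-- staircase exponent is lower unitriangular.
noncomputable def esymmComplMatrix (n : ℕ) : Matrix (Fin n) (Fin n) (MvPolynomial (Fin n) ℤ) :=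
  .of fun a q => (-1) ^ (n - 1 - q : ℕ) * esymmOn ℤ (univ.erase a) (n - 1 - q : ℕ)

lemma hsymmOn_univ_eq_hh (p : ℤ) : hsymmOn ℤ (univ : Finset (Fin n)) p = hh n p := by
  rcases lt_or_ge p 0 with hp | hp
  · simp [hsymmOn_of_neg hp, hh, hp.not_ge]
  · obtain ⟨p, rfl⟩ := Int.eq_ofNat_of_zero_le hp
    rw [hsymmOn_univ]
    simp [hh]

lemma X_pow_matrix_eq_esymmComplMatrix_mul (m : Fin n → ℕ) :
    Matrix.of (fun i j => (X i : MvPolynomial (Fin n) ℤ) ^ m j)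
      = esymmComplMatrix n * jacobiTrudiMatrix m := by
  refine Matrix.ext fun i j => ?_
  rw [Matrix.of_apply, X_pow_eq_sum_esymmOn_erase_mul_hsymmOn i, Matrix.mul_apply,
    Fintype.card_fin, ← Fin.sum_univ_eq_sum_range
      fun q => (-1) ^ q * esymmOn ℤ (univ.erase i) q * hsymmOn ℤ univ (m j - q)]
  refine Fintype.sum_equiv Fin.revPerm _ _ fun q => ?_
  have hq := q.isLt
  simp only [esymmComplMatrix, jacobiTrudiMatrix, Matrix.of_apply, Fin.revPerm_apply,
    Fin.val_rev, hsymmOn_univ_eq_hh]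
  rw [show n - 1 - (n - (q + 1)) = q by omega,
    show (m j : ℤ) - q = m j + ((n - (q + 1) : ℕ) : ℤ) + 1 - n by omega]

lemma det_X_pow_staircase :
    (Matrix.of fun i j : Fin n => (X i : MvPolynomial (Fin n) ℤ) ^ (n - 1 - j : ℕ)).det
      = vandermondePoly n := by
  have h := Matrix.det_projVandermonde (1 : Fin n → MvPolynomial (Fin n) ℤ) X
  simp only [Pi.one_apply, one_mul] at h
  convert h using 2
  · refine Matrix.ext fun i j => ?_
    simp [Matrix.projVandermonde, Matrix.rectVandermonde, Fin.val_rev, Nat.sub_sub, add_comm]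
  · simp [vandermondePoly, prod_filter, Fintype.prod_prod_type, ← filter_lt_eq_Ioi]

lemma det_jacobiTrudiMatrix_staircase :
    (jacobiTrudiMatrix fun j : Fin n => n - 1 - (j : ℕ)).det = 1 := by
  rw [Matrix.det_of_isLowerTriangular]
  · refine prod_eq_one fun q _ => ?_
    have hq := q.isLt
    rw [jacobiTrudiMatrix, Matrix.of_apply, show ((n - 1 - q : ℕ) : ℤ) + q + 1 - n = 0 by omega]
    simp [hh]
  · intro q j hqj
    have hj := j.isLt
    have hqj' : (q : ℕ) < j := hqj
    rw [jacobiTrudiMatrix, Matrix.of_apply, hh,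
      if_neg (show ¬ (0 : ℤ) ≤ ((n - 1 - j : ℕ) : ℤ) + q + 1 - n by omega)]

lemma det_esymmComplMatrix : (esymmComplMatrix n).det = vandermondePoly n := by
  rw [← det_X_pow_staircase, X_pow_matrix_eq_esymmComplMatrix_mul, Matrix.det_mul,
    det_jacobiTrudiMatrix_staircase, mul_one]

theorem det_X_pow_eq_vandermondePoly_mul (m : Fin n → ℕ) :
    (Matrix.of fun i j => (X i : MvPolynomial (Fin n) ℤ) ^ m j).det
      = vandermondePoly n * (jacobiTrudiMatrix m).det := by
  rw [X_pow_matrix_eq_esymmComplMatrix_mul, Matrix.det_mul, det_esymmComplMatrix]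

end Bialternant

theorem sum_prod_sign_smul_det_of_prod {ι m R : Type*} [Fintype ι] [DecidableEq ι] [Fintype m]
    [DecidableEq m] [CommRing R] (hι : Odd (Fintype.card ι)) (f : ι → Matrix m m R) :
    ∑ g : ι → Perm m, (∏ s, (Perm.sign (g s) : ℤ)) •
        (Matrix.of fun i j => ∏ s, f s i (g s j)).det
      = (Fintype.card m).factorial • ∏ s, (f s).det := by
  set ε : Perm m → R := fun π => ((Perm.sign π : ℤ) : R)
  have hrows (π : Perm m) (s : ι) :
      ∑ τ : Perm m, ε τ * ∏ j, f s (π j) (τ j) = ε π * (f s).det := by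
    rw [← Matrix.det_permute, ← Matrix.det_transpose, Matrix.det_apply']
    rfl
  have hsign (π : Perm m) : ε π * ε π ^ Fintype.card ι = 1 := by
    obtain ⟨r, hr⟩ := hι
    rw [← pow_succ', hr, show 2 * r + 1 + 1 = 2 * (r + 1) by ring, pow_mul]
    simp [ε, ← Int.cast_pow, ← Units.val_pow_eq_pow_val, Int.units_sq]
  calc _ = ∑ π : Perm m, ε π * ∏ s, ∑ τ : Perm m, ε τ * ∏ j, f s (π j) (τ j) := by
        simp only [Matrix.det_apply', Matrix.of_apply, zsmul_eq_mul, Int.cast_prod, mul_sum,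
          Fintype.prod_sum, prod_mul_distrib]
        rw [sum_comm]
        refine sum_congr rfl fun π _ => sum_congr rfl fun g _ => ?_
        rw [prod_comm (s := univ (α := m))]
        ring
    _ = ∑ _π : Perm m, ∏ s, (f s).det := by
        refine sum_congr rfl fun π _ => ?_
        rw [prod_congr rfl fun s _ => hrows π s, prod_mul_distrib, prod_const, card_univ,
          ← mul_assoc, hsign, one_mul]
    _ = _ := by simp [Fintype.card_perm]

theorem vandermondePoly_mul_sum_sum_sign_smul_prod_hh {n : ℕ} {ι : Type*} [Fintype ι]
    [DecidableEq ι] (hι : Odd (Fintype.card ι)) (c : ι → Fin n → ℕ) :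
    vandermondePoly n * ∑ g : ι → Perm (Fin n), ∑ τ : Perm (Fin n),
        ((∏ s, (Perm.sign (g s) : ℤ)) * Perm.sign τ) •
          ∏ i, hh n ((∑ s, c s (g s i) : ℕ) + (τ i : ℕ) + 1 - n)
      = n.factorial •
          ∏ s, (Matrix.of fun i j => (X i : MvPolynomial (Fin n) ℤ) ^ c s j).det := by
  have hcols (m : Fin n → ℕ) :
      ∑ τ : Perm (Fin n), (Perm.sign τ : ℤ) • ∏ i, hh n (m i + (τ i : ℕ) + 1 - n)
        = (jacobiTrudiMatrix m).det := by
    simp [Matrix.det_apply, jacobiTrudiMatrix, Units.smul_def]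
  calc _ = ∑ g : ι → Perm (Fin n), (∏ s, (Perm.sign (g s) : ℤ)) •
          (Matrix.of fun i j => ∏ s, (X i : MvPolynomial (Fin n) ℤ) ^ c s (g s j)).det := by
        rw [mul_sum]
        refine sum_congr rfl fun g _ => ?_
        simp_rw [mul_smul, ← smul_sum, hcols, mul_smul_comm, ← det_X_pow_eq_vandermondePoly_mul,
          prod_pow_eq_pow_sum]
    _ = _ := by
        simpa using sum_prod_sign_smul_det_of_prod hι
          fun s => .of fun i j => (X i : MvPolynomial (Fin n) ℤ) ^ c s j

lemma prod_det_X_pow_staircase_add_ite {ι : Type*} [Fintype ι] [DecidableEq ι] {n : ℕ} (z : ι)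
    (lam : Fin n → ℕ) :
    ∏ s, (Matrix.of fun i j : Fin n =>
        (X i : MvPolynomial (Fin n) ℤ) ^ ((if s = z then lam j else 0) + (n - 1 - j))).det
      = (Matrix.of fun i j : Fin n => X i ^ (lam j + (n - 1 - j))).det
        * vandermondePoly n ^ (Fintype.card ι - 1) := by
  rw [Fintype.prod_eq_mul_prod_subtype_ne _ z]
  congr 1
  · simp
  calc _ = ∏ _s : {s // s ≠ z}, vandermondePoly n :=
        prod_congr rfl fun s _ => by simpa [s.2] using det_X_pow_staircase
    _ = _ := by simp [Fintype.card_subtype_compl]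

theorem vandermondePoly_mul_sum_sign_smul_prod_hh {ι : Type*} [Fintype ι] [DecidableEq ι]
    {n : ℕ} (hι : Even (Fintype.card ι)) {z L : ι} (hzL : z ≠ L) (lam : Fin n → ℕ) :
    vandermondePoly n * ∑ σ : ι → Perm (Fin n), (∏ s, (Perm.sign (σ s) : ℤ)) •
        ∏ i, hh n (lam (σ z i) + ∑ s ∈ univ.erase L, ((n : ℤ) - ((σ s i : ℕ) + 1))
          + ((σ L i : ℕ) + 1) - n)
      = n.factorial • ((Matrix.of fun i j : Fin n =>
          (X i : MvPolynomial (Fin n) ℤ) ^ (lam j + (n - 1 - j))).det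
        * vandermondePoly n ^ (Fintype.card ι - 2)) := by
  set z' : {s // s ≠ L} := ⟨z, hzL⟩
  set c : {s // s ≠ L} → Fin n → ℕ := fun s v => (if s = z' then lam v else 0) + (n - 1 - v)
  have hcard : Fintype.card {s // s ≠ L} = Fintype.card ι - 1 := by
    simp [Fintype.card_subtype_compl]
  have hodd : Odd (Fintype.card {s // s ≠ L}) := by
    rw [hcard]
    exact Nat.Even.sub_odd (Fintype.card_pos_iff.mpr ⟨L⟩) hι odd_one
  rw [← (Equiv.funSplitAt L _).symm.sum_comp, Fintype.sum_prod_type, sum_comm,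
    show Fintype.card ι - 2 = Fintype.card {s // s ≠ L} - 1 by omega,
    ← prod_det_X_pow_staircase_add_ite z', ← vandermondePoly_mul_sum_sum_sign_smul_prod_hh hodd c]
  congr 1
  refine sum_congr rfl fun g _ => sum_congr rfl fun τ _ => ?_
  set σ := (Equiv.funSplitAt L (Perm (Fin n))).symm (τ, g)
  have hσL : σ L = τ := by simp [σ]
  have hσ (s : {s // s ≠ L}) : σ s = g s := by simp [σ, s.2]
  have hexp (i : Fin n) : ((∑ s, c s (g s i) : ℕ) : ℤ)
      = lam (g z' i) + ∑ s : {s // s ≠ L}, ((n : ℤ) - ((g s i : ℕ) + 1)) := by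
    simp only [c, Nat.cast_sum, Nat.cast_add, sum_add_distrib, sum_ite_eq', mem_univ, if_true]
    congr 1
    exact sum_congr rfl fun s _ => by have := (g s i).isLt; omega
  simp_rw [Fintype.prod_eq_mul_prod_subtype_ne _ L, hσL, show σ z = g z' from hσ z',
    sum_subtype (univ.erase L) (p := (· ≠ L)) (by simp), hσ, mul_comm _ (∏ _, _)]
  refine congrArg _ (prod_congr rfl fun i _ => congrArg (hh n) ?_)
  rw [hexp]
  ring

/-- `S_λ(X) Δ(X)^{2(k−1)}` is the `(1/n!)`-scaled hyperdeterminant of the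
`2k`-th order hypermatrix with entries
`h_{λ_{i_1}+(n−i_1)+⋯+(n−i_{2k−1})+i_{2k}−n}(X)`:
`n! ⋅ det(x_i^{λ_j+n−j}) ⋅ Δ^{2k−2} = Δ ⋅ ∑_{σ} sign(σ_1)⋯sign(σ_{2k})
∏_i h_{λ_{σ_1(i)}+(n−σ_1(i))+⋯+(n−σ_{2k−1}(i))+σ_{2k}(i)−n}(X)`. -/
theorem schur_vandermonde_pow_eq_hyperdet
    (n k : ℕ) (hk : 1 ≤ k)
    (lam : Fin n → ℕ) :
    (Nat.factorial n : ℤ) •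
        ((Matrix.of fun i j : Fin n =>
            MvPolynomial.X i ^ (lam j + (n - 1 - (j : ℕ)))).det *
          vandermondePoly n ^ (2 * k - 2))
      = vandermondePoly n *
          ∑ σ : Fin (2 * k) → Equiv.Perm (Fin n),
            (∏ s, (Equiv.Perm.sign (σ s) : ℤ)) •
              ∏ i, hh n
                ((lam (σ ⟨0, by omega⟩ i) : ℤ)
                  + (∑ s ∈ Finset.univ.filter (fun s : Fin (2 * k) => (s : ℕ) < 2 * k - 1),
                      ((n : ℤ) - (((σ s i : ℕ) : ℤ) + 1)))
                  + (((σ ⟨2 * k - 1, by omega⟩ i : ℕ) : ℤ) + 1) - (n : ℤ)) := by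
  have hfilter : univ.filter (fun s : Fin (2 * k) => (s : ℕ) < 2 * k - 1)
      = univ.erase ⟨2 * k - 1, by omega⟩ := by
    ext s
    simp only [mem_filter, mem_univ, true_and, mem_erase, ne_eq, Fin.ext_iff, and_true]
    omega
  have key := vandermondePoly_mul_sum_sign_smul_prod_hh (ι := Fin (2 * k)) (by simp)
    (z := ⟨0, by omega⟩) (L := ⟨2 * k - 1, by omega⟩)
    (by simp only [ne_eq, Fin.ext_iff]; omega) lam
  rw [Fintype.card_fin, ← natCast_zsmul] at key
  rw [hfilter, key]
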